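/- Let T be a DFS tree of a connected graph G, and let u' be an ancestor of u with high(u) = high(u'). Then B(u) ⊆ B(u'), and consequently low(u') ≤ low(u). -/

import Mathlib

variable {V E : Type}

/-- Reachability in the multigraph with edge-endpoint map `ends`,
avoiding (i.e. after deleting) the edges in `S`. -/
def Reach (ends : E → V × V) (S : Set E) : V → V → Prop :=
  Relation.ReflTransGen (fun a b => ∃ e, e ∉ S ∧ (ends e = (a, b) ∨ ends e = (b, a)))

/-- The multigraph is connected. -/
def Connected (ends : E → V × V) : Prop := ∀ u v : V, Reach ends ∅ u v

/-- `u` and `v` are `k`-edge-connected: no set of at most `k - 1` edges separates them. -/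
def KConn (ends : E → V × V) (k : ℕ) (u v : V) : Prop :=
  ∀ S : Finset E, S.card ≤ k - 1 → Reach ends (↑S) u v

/-- The multigraph is `k`-edge-connected: no edge cut of size less than `k`. -/
def GraphKConn (ends : E → V × V) (k : ℕ) : Prop :=
  ∀ S : Finset E, S.card < k → ∀ u v : V, Reach ends (↑S) u v

/-- `S` is an edge cut: removing it disconnects the graph. -/
def IsCutSet (ends : E → V × V) (S : Set E) : Prop :=
  ∃ u v : V, ¬ Reach ends S u v

/-- A (candidate) DFS tree on the multigraph `ends : E → V × V`: a root, a parent
function, a choice of a tree edge for each non-root vertex, and a preorder numbering. -/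
structure DFSTree (V E : Type) where
  ends : E → V × V
  root : V
  parent : V → V
  treeEdge : V → E
  pre : V → ℕ

namespace DFSTree

variable (t : DFSTree V E)

/-- `t.Anc a b` : `a` is an ancestor of `b` (every vertex is an ancestor of itself). -/
def Anc (a b : V) : Prop :=
  Relation.ReflTransGen (fun x y => x ≠ t.root ∧ y = t.parent x) b a

/-- `a` is a proper ancestor of `b`. -/
def ProperAnc (a b : V) : Prop := t.Anc a b ∧ a ≠ b

def IsTreeEdge (e : E) : Prop := ∃ v, v ≠ t.root ∧ e = t.treeEdge v

/-- The set `B(v)`: back-edges `(x, y)` with `x` a descendant of `v` and `y` a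
proper ancestor of `v`. -/
def B (v : V) : Set E :=
  {e | ¬ t.IsTreeEdge e ∧ t.Anc v (t.ends e).1 ∧ t.ProperAnc (t.ends e).2 v}

/-- `m` is the nearest common ancestor of the set `S` of vertices. -/
def IsNCA (S : Set V) (m : V) : Prop :=
  (∀ x ∈ S, t.Anc m x) ∧ ∀ m' : V, (∀ x ∈ S, t.Anc m' x) → t.Anc m' m

/-- `m = M(v)`: the nearest common ancestor of all lower ends of back-edges in `B(v)`. -/
def IsM (v m : V) : Prop := t.IsNCA {x | ∃ e ∈ t.B v, (t.ends e).1 = x} m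

/-- `h = high(v)`: the highest (in preorder) upper end of a back-edge in `B(v)`. -/
def IsHigh (v h : V) : Prop :=
  (∃ e ∈ t.B v, (t.ends e).2 = h) ∧ ∀ e ∈ t.B v, t.pre (t.ends e).2 ≤ t.pre h

/-- `l = low(v)`: the lowest (in preorder) upper end of a back-edge in `B(v)`. -/
def IsLow (v l : V) : Prop :=
  (∃ e ∈ t.B v, (t.ends e).2 = l) ∧ ∀ e ∈ t.B v, t.pre l ≤ t.pre (t.ends e).2

/-- `v` and `w` have the same `M`-value. -/
def SameM (v w : V) : Prop := ∃ m, t.IsM v m ∧ t.IsM w m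

/-- `n = nextM(v)`: the greatest vertex smaller than `v` with the same `M`-value. -/
def IsNextM (v n : V) : Prop :=
  t.pre n < t.pre v ∧ t.SameM v n ∧
    ∀ z, t.pre z < t.pre v → t.SameM v z → t.pre z ≤ t.pre n

/-- `l = lastM(v)`: the smallest vertex with the same `M`-value as `v`. -/
def IsLastM (v l : V) : Prop :=
  t.SameM v l ∧ ∀ z, t.SameM v z → t.pre l ≤ t.pre z

/-- `t` really is a DFS spanning tree of the connected multigraph `ends`. -/
structure IsDFS : Prop where
  conn : Connected t.ends
  parent_root : t.parent t.root = t.root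
  tree_ends : ∀ v, v ≠ t.root → t.ends (t.treeEdge v) = (v, t.parent v)
  treeEdge_inj : ∀ v w, v ≠ t.root → w ≠ t.root → t.treeEdge v = t.treeEdge w → v = w
  back : ∀ e, ¬ t.IsTreeEdge e → t.Anc (t.ends e).2 (t.ends e).1
  pre_inj : Function.Injective t.pre
  pre_mono : ∀ a b, t.Anc a b → t.pre a ≤ t.pre b
  pre_interval : ∀ a b : V,
    t.pre a ≤ t.pre b → t.pre b < t.pre a + {x | t.Anc a x}.ncard → t.Anc a b

end DFSTree

namespace DFSTree

variable {t : DFSTree V E}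

theorem anc_total_of_anc {u a b : V} (ha : t.Anc a u) (hb : t.Anc b u) :
    t.Anc a b ∨ t.Anc b a :=
  (Relation.ReflTransGen.total_of_right_unique
    (fun _ _ _ hy hz => hy.2.trans hz.2.symm) ha hb).symm

theorem IsDFS.pre_lt_of_properAnc (ht : t.IsDFS) {a b : V} (hab : t.ProperAnc a b) :
    t.pre a < t.pre b :=
  (ht.pre_mono a b hab.1).lt_of_ne fun hpre => hab.2 (ht.pre_inj hpre)

theorem IsDFS.pre_high_lt (ht : t.IsDFS) {v h : V} (hH : t.IsHigh v h) : t.pre h < t.pre v := by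
  obtain ⟨e, he, rfl⟩ := hH.1
  exact ht.pre_lt_of_properAnc he.2.2

theorem mem_B_of_anc_of_not_anc {u u' : V} {e : E} (hanc : t.Anc u' u) (he : e ∈ t.B u)
    (hnot : ¬ t.Anc u' (t.ends e).2) : e ∈ t.B u' := by
  obtain ⟨hback, hlower, hupper, -⟩ := he
  rcases anc_total_of_anc hupper hanc with hupper' | hu'
  · exact ⟨hback, hlower.trans hanc, hupper', fun heq => hnot (heq ▸ .refl)⟩
  · exact absurd hu' hnot

theorem IsDFS.B_subset_of_high_eq (ht : t.IsDFS) {u u' h : V} (hanc : t.Anc u' u)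
    (hH : t.IsHigh u h) (hH' : t.IsHigh u' h) : t.B u ⊆ t.B u' := by
  intro e he
  refine mem_B_of_anc_of_not_anc hanc he fun hu' => ?_
  have : t.pre u' ≤ t.pre h := (ht.pre_mono _ _ hu').trans (hH.2 e he)
  exact (ht.pre_high_lt hH').not_ge this

theorem IsLow.pre_le_of_B_subset {v w l l' : V} (hsub : t.B v ⊆ t.B w)
    (hL : t.IsLow v l) (hL' : t.IsLow w l') : t.pre l' ≤ t.pre l := by
  obtain ⟨e, he, rfl⟩ := hL.1
  exact hL'.2 e (hsub he)

end DFSTree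

/-- If `u'` is an ancestor of `u` with `high(u) = high(u')`, then `B(u) ⊆ B(u')`
and consequently `low(u') ≤ low(u)`. -/
theorem high_eq_imp_B_subset_and_low_le (t : DFSTree V E) (ht : t.IsDFS)
    (u u' h l l' : V) (hanc : t.Anc u' u)
    (hH : t.IsHigh u h) (hH' : t.IsHigh u' h)
    (hL : t.IsLow u l) (hL' : t.IsLow u' l') :
    t.B u ⊆ t.B u' ∧ t.pre l' ≤ t.pre l :=
  have hsub := ht.B_subset_of_high_eq hanc hH hH'
  ⟨hsub, hL.pre_le_of_B_subset hsub hL'⟩
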